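/- Approximation guarantee of CAST: fix ε > 0, δ ∈ (0,1), a budget k with 0 ≤ k ≤ |P|, assume N is nonempty, and let m = ⌈(|N|² / (2ε²)) · ln(2^{|P|+1} / δ)⌉. Let A be any function assigning to each m-tuple ω = (H_1, …, H_m) of realizations a set A(ω) ⊆ P with |A(ω)| ≤ k such that F̂_m^ω(A(ω)) ≤ 2√|P| · min{F̂_m^ω(S) : S ⊆ P, |S| ≤ k}, where F̂_m^ω(S) = (1/m) Σ_{i=1}^m f_{H_i}(S). Let S* minimize F over all S ⊆ P with |S| ≤ k. Then under the product distribution on m-tuples of realizations, the probability that F(A(ω)) ≤ 2√|P| · F(S*) + ε · (1 + 2√|P|) is at least 1 − 2δ. -/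

import Mathlib

open Finset

/-- A single transmission step along a live edge of `H`, avoiding the removed vertex set `S`. -/
def MintStep {α : Type*} (H : Finset (α × α)) (S : Finset α) (x y : α) : Prop :=
  (x, y) ∈ H ∧ x ∉ S ∧ y ∉ S

/-- `u` is reachable from `v` in `H[V \ S]`: there is a directed path (possibly of length 0)
from `v` to `u` using only edges of `H`, all of whose vertices avoid `S`. -/
def MintReach {α : Type*} (H : Finset (α × α)) (S : Finset α) (v u : α) : Prop :=
  v ∉ S ∧ Relation.ReflTransGen (MintStep H S) v u

/-- The realized MINT objective `f_H(S)`: the number of negative nodes (nodes outside `P`)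
reachable from some untreated positive node (a node of `P \ S`) in `H[V \ S]`. -/
noncomputable def mintf {α : Type*} [DecidableEq α] (P : Finset α) (H : Finset (α × α))
    (S : Finset α) : ℕ :=
  Set.ncard {u : α | u ∉ P ∧ ∃ v ∈ P \ S, MintReach H S v u}

/-- The probability of the live-edge realization `H ⊆ E`. -/
def mintPr {α : Type*} [DecidableEq α] (E : Finset (α × α)) (w : α × α → ℝ)
    (H : Finset (α × α)) : ℝ :=
  (∏ e ∈ H, w e) * ∏ e ∈ E \ H, (1 - w e)

/-- The expected MINT objective `F(S) = Σ_{H ⊆ E} Pr(H) · f_H(S)`. -/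
noncomputable def mintF {α : Type*} [DecidableEq α] (E : Finset (α × α)) (w : α × α → ℝ)
    (P : Finset α) (S : Finset α) : ℝ :=
  ∑ H ∈ E.powerset, mintPr E w H * (mintf P H S : ℝ)

/-! Each `f_H(S)` lies in `[0, |N|]`, so by Hoeffding's inequality the empirical mean `F̂(S)` of
`m` independent realizations is at least `ε` away from `F(S)` with probability at most
`2 exp(-2mε²/|N|²)`. A union bound over the `2^|P|` subsets of `P` and the choice of `m` make
`|F̂(S) - F(S)| < ε` hold simultaneously for all `S ⊆ P` with probability at least `1 - δ`, and
there `F(A) < F̂(A) + ε ≤ 2√|P| F̂(S*) + ε < 2√|P| (F(S*) + ε) + ε`. -/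

open MeasureTheory ProbabilityTheory Real

section Hoeffding

variable {ι : Type*} [MeasurableSpace ι] {μ : Measure ι} [IsProbabilityMeasure μ]
  {g : ι → ℝ} {a b : ℝ} {m : ℕ}

lemma measureReal_pi_le_sum_sub_integral_le (hg : Measurable g) (hgab : ∀ x, g x ∈ Set.Icc a b)
    {t : ℝ} (ht : 0 ≤ t) :
    (Measure.pi fun _ : Fin m => μ).real {ω | t ≤ ∑ i, (g (ω i) - μ[g])}
      ≤ exp (-2 * t ^ 2 / (m * (b - a) ^ 2)) := by
  have hsubG (i : Fin m) : HasSubgaussianMGF (fun ω : Fin m → ι => g (ω i) - μ[g])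
      ((‖b - a‖₊ / 2) ^ 2) (Measure.pi fun _ : Fin m => μ) := by
    have h : HasSubgaussianMGF (fun x => g x - μ[g]) ((‖b - a‖₊ / 2) ^ 2)
        ((Measure.pi fun _ : Fin m => μ).map (fun ω => ω i)) := by
      rw [(measurePreserving_eval (fun _ : Fin m => μ) i).map_eq]
      exact hasSubgaussianMGF_of_mem_Icc hg.aemeasurable (ae_of_all μ hgab)
    exact HasSubgaussianMGF.of_map (μ := Measure.pi fun _ : Fin m => μ)
      (Y := fun ω : Fin m → ι => ω i) (measurable_pi_apply i).aemeasurable h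
  have hindep : iIndepFun (fun (i : Fin m) (ω : Fin m → ι) => g (ω i) - μ[g])
      (Measure.pi fun _ : Fin m => μ) :=
    iIndepFun_pi (X := fun _ x => g x - μ[g]) fun _ => (hg.sub_const _).aemeasurable
  refine (HasSubgaussianMGF.measure_sum_ge_le_of_iIndepFun hindep
    (s := Finset.univ) (fun i _ => hsubG i) ht).trans_eq ?_
  simp only [Finset.sum_const, Finset.card_univ, Fintype.card_fin, nsmul_eq_mul, NNReal.coe_mul,
    NNReal.coe_natCast, NNReal.coe_pow, NNReal.coe_div, coe_nnnorm, Real.norm_eq_abs, sq_abs,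
    NNReal.coe_ofNat, div_pow]
  rw [show (2 : ℝ) * (m * ((b - a) ^ 2 / 2 ^ 2)) = m * (b - a) ^ 2 / 2 by ring,
    div_div_eq_mul_div]
  ring_nf

lemma measureReal_pi_le_abs_mean_sub_integral_le (hg : Measurable g)
    (hgab : ∀ x, g x ∈ Set.Icc a b) (hm : 0 < m) {ε : ℝ} (hε : 0 ≤ ε) :
    (Measure.pi fun _ : Fin m => μ).real {ω | ε ≤ |1 / (m : ℝ) * ∑ i, g (ω i) - μ[g]|}
      ≤ 2 * exp (-2 * m * ε ^ 2 / (b - a) ^ 2) := by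
  have hm' : (0 : ℝ) < m := Nat.cast_pos.2 hm
  have hsplit : {ω : Fin m → ι | ε ≤ |1 / (m : ℝ) * ∑ i, g (ω i) - μ[g]|}
      ⊆ {ω | m * ε ≤ ∑ i, (g (ω i) - μ[g])} ∪ {ω | m * ε ≤ ∑ i, (-g (ω i) - μ[-g])} := by
    intro ω (hω : ε ≤ |_|)
    have hsum : ∑ i, (g (ω i) - μ[g]) = m * (1 / (m : ℝ) * ∑ i, g (ω i) - μ[g]) := by
      rw [Finset.sum_sub_distrib]; field_simp; simp
    have hneg : ∑ i, (-g (ω i) - μ[-g]) = -∑ i, (g (ω i) - μ[g]) := by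
      simp only [Pi.neg_apply, integral_neg, ← Finset.sum_neg_distrib]
      exact Finset.sum_congr rfl fun _ _ => by ring
    rcases le_abs'.1 hω with h | h
    · right
      show (m : ℝ) * ε ≤ _
      rw [hneg, hsum, ← mul_neg]
      exact mul_le_mul_of_nonneg_left (le_neg_of_le_neg h) hm'.le
    · left
      show (m : ℝ) * ε ≤ _
      rw [hsum]
      exact mul_le_mul_of_nonneg_left h hm'.le
  have hexp :
      exp (-2 * (m * ε) ^ 2 / (m * (b - a) ^ 2)) = exp (-2 * m * ε ^ 2 / (b - a) ^ 2) := by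
    congr 1; field_simp
  calc _ ≤ _ := measureReal_mono hsplit
    _ ≤ _ := measureReal_union_le _ _
    _ ≤ exp (-2 * (m * ε) ^ 2 / (m * (b - a) ^ 2))
          + exp (-2 * (m * ε) ^ 2 / (m * (-a - -b) ^ 2)) := by
        gcongr
        · exact measureReal_pi_le_sum_sub_integral_le hg hgab (by positivity)
        · exact measureReal_pi_le_sum_sub_integral_le hg.neg
            (fun x => ⟨neg_le_neg (hgab x).2, neg_le_neg (hgab x).1⟩) (by positivity)
    _ = _ := by rw [show -a - -b = b - a by ring, hexp]; ring

end Hoeffding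

section DiscreteDistribution

variable {ι : Type*} [MeasurableSpace ι]

noncomputable def discreteMeasure (Ω : Finset ι) (p : ι → ℝ) : Measure ι :=
  ∑ x ∈ Ω, ENNReal.ofReal (p x) • Measure.dirac x

variable {Ω : Finset ι} {p : ι → ℝ}

lemma discreteMeasure_singleton [MeasurableSingletonClass ι] {x : ι} (hx : x ∈ Ω) :
    discreteMeasure Ω p {x} = ENNReal.ofReal (p x) := by
  rw [discreteMeasure, Measure.coe_finsetSum, Finset.sum_apply, Finset.sum_eq_single x]
  · simp
  · intro y _ hyx
    simp [hyx]
  · exact fun h => absurd hx h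

lemma isProbabilityMeasure_discreteMeasure (hp0 : ∀ x ∈ Ω, 0 ≤ p x) (hp1 : ∑ x ∈ Ω, p x = 1) :
    IsProbabilityMeasure (discreteMeasure Ω p) := by
  constructor
  simp [discreteMeasure, ← ENNReal.ofReal_sum_of_nonneg hp0, hp1]

lemma integral_discreteMeasure [MeasurableSingletonClass ι] (hp0 : ∀ x ∈ Ω, 0 ≤ p x)
    (f : ι → ℝ) :
    ∫ x, f x ∂discreteMeasure Ω p = ∑ x ∈ Ω, p x * f x := by
  rw [discreteMeasure, integral_finsetSum_measure]
  · refine Finset.sum_congr rfl fun x hx => ?_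
    rw [integral_smul_measure, integral_dirac, ENNReal.toReal_ofReal (hp0 x hx), smul_eq_mul]
  · exact fun x _ => (integrable_dirac enorm_lt_top).smul_measure ENNReal.ofReal_ne_top

lemma sum_prod_filter_le_measureReal_pi [MeasurableSingletonClass ι] (hp0 : ∀ x ∈ Ω, 0 ≤ p x)
    (hp1 : ∑ x ∈ Ω, p x = 1) {m : ℕ} (pred : (Fin m → ι) → Prop) [DecidablePred pred] :
    ∑ ω ∈ (Fintype.piFinset fun _ : Fin m => Ω).filter pred, ∏ i, p (ω i)
      ≤ (Measure.pi fun _ : Fin m => discreteMeasure Ω p).real {ω | pred ω} := by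
  have := isProbabilityMeasure_discreteMeasure hp0 hp1
  set s := (Fintype.piFinset fun _ : Fin m => Ω).filter pred
  have hs : ∀ ω ∈ s, ∀ i, ω i ∈ Ω := fun ω hω =>
    Fintype.mem_piFinset.1 (Finset.mem_filter.1 hω).1
  calc ∑ ω ∈ s, ∏ i, p (ω i)
      = (Measure.pi fun _ : Fin m => discreteMeasure Ω p).real s := by
        rw [measureReal_def, ← sum_measure_singleton, ENNReal.toReal_sum (by finiteness)]
        refine Finset.sum_congr rfl fun ω hω => ?_
        rw [Measure.pi_singleton, ENNReal.toReal_prod]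
        refine Finset.prod_congr rfl fun i _ => ?_
        rw [discreteMeasure_singleton (hs ω hω i), ENNReal.toReal_ofReal (hp0 _ (hs ω hω i))]
    _ ≤ _ := measureReal_mono fun ω hω => (Finset.mem_filter.1 hω).2

lemma one_sub_measureReal_pi_le_sum_prod_filter [MeasurableSingletonClass ι]
    (hp0 : ∀ x ∈ Ω, 0 ≤ p x) (hp1 : ∑ x ∈ Ω, p x = 1) {m : ℕ} {bad good : (Fin m → ι) → Prop}
    [DecidablePred bad] [DecidablePred good]
    (h : ∀ ω ∈ Fintype.piFinset (fun _ : Fin m => Ω), ¬bad ω → good ω) :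
    1 - (Measure.pi fun _ : Fin m => discreteMeasure Ω p).real {ω | bad ω}
      ≤ ∑ ω ∈ (Fintype.piFinset fun _ : Fin m => Ω).filter good, ∏ i, p (ω i) := by
  set Ωm := Fintype.piFinset fun _ : Fin m => Ω
  have htotal : ∑ ω ∈ Ωm, ∏ i, p (ω i) = 1 := by
    rw [← Finset.sum_pow', hp1, one_pow]
  have hbad : ∑ ω ∈ Ωm.filter (¬good ·), ∏ i, p (ω i) ≤ ∑ ω ∈ Ωm.filter bad, ∏ i, p (ω i) := by
    refine Finset.sum_le_sum_of_subset_of_nonneg (fun ω hω => ?_) fun ω hω _ =>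
      Finset.prod_nonneg fun i _ => hp0 _ (Fintype.mem_piFinset.1 (Finset.mem_filter.1 hω).1 i)
    obtain ⟨hωm, hng⟩ := Finset.mem_filter.1 hω
    exact Finset.mem_filter.2 ⟨hωm, by_contra fun hnb => hng (h ω hωm hnb)⟩
  have := Finset.sum_filter_add_sum_filter_not Ωm good fun ω => ∏ i, p (ω i)
  linarith [sum_prod_filter_le_measureReal_pi hp0 hp1 bad]

end DiscreteDistribution

lemma mul_exp_neg_le_of_le_mul_log {N ε K δ m : ℝ} (hN : 0 < N) (hε : 0 < ε) (hK : 0 < K)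
    (hδ : 0 < δ) (hm : N ^ 2 / (2 * ε ^ 2) * log (K / δ) ≤ m) :
    K * exp (-2 * m * ε ^ 2 / N ^ 2) ≤ δ := by
  have hlog : log (K / δ) ≤ 2 * m * ε ^ 2 / N ^ 2 := by
    rw [le_div_iff₀ (by positivity)]
    rw [div_mul_eq_mul_div, div_le_iff₀ (by positivity)] at hm
    linarith
  calc K * exp (-2 * m * ε ^ 2 / N ^ 2) ≤ K * exp (-log (K / δ)) := by
        gcongr; rw [neg_mul, neg_mul, neg_div]; exact neg_le_neg hlog
    _ = δ := by rw [exp_neg, exp_log (by positivity), inv_div, mul_div_cancel₀ _ hK.ne']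

lemma le_mul_add_of_abs_sub_lt {x x' y y' c ε : ℝ} (hc : 0 ≤ c) (hx : |x' - x| < ε)
    (hy : |y' - y| < ε) (h : x' ≤ c * y') : x ≤ c * y + ε * (1 + c) := by
  rw [abs_sub_lt_iff] at hx hy
  nlinarith

section Mint

variable {α : Type*} [DecidableEq α]

lemma mintPr_nonneg {E : Finset (α × α)} {w : α × α → ℝ} (hw : ∀ e ∈ E, 0 ≤ w e ∧ w e ≤ 1)
    {H : Finset (α × α)} (hH : H ∈ E.powerset) : 0 ≤ mintPr E w H :=
  mul_nonneg (Finset.prod_nonneg fun e he => (hw e (Finset.mem_powerset.1 hH he)).1)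
    (Finset.prod_nonneg fun e he => sub_nonneg.2 (hw e (Finset.mem_sdiff.1 he).1).2)

lemma sum_mintPr_powerset (E : Finset (α × α)) (w : α × α → ℝ) :
    ∑ H ∈ E.powerset, mintPr E w H = 1 := by
  simp only [mintPr, ← Finset.prod_add, add_sub_cancel, Finset.prod_const_one]

lemma mintf_le_card_compl [Fintype α] (P : Finset α) (H : Finset (α × α)) (S : Finset α) :
    mintf P H S ≤ Pᶜ.card := by
  rw [← Set.ncard_coe_finset]
  exact Set.ncard_le_ncard (fun u hu => by simpa using hu.1) (Finset.finite_toSet _)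

lemma mintF_eq_integral [Countable α] {E : Finset (α × α)} {w : α × α → ℝ}
    (hw : ∀ e ∈ E, 0 ≤ w e ∧ w e ≤ 1) (P S : Finset α) :
    mintF E w P S = ∫ H, (mintf P H S : ℝ) ∂discreteMeasure E.powerset (mintPr E w) :=
  (integral_discreteMeasure (fun _ => mintPr_nonneg hw) _).symm

noncomputable def mintFhat {m : ℕ} (P : Finset α) (ω : Fin m → Finset (α × α)) (S : Finset α) :
    ℝ :=
  1 / (m : ℝ) * ∑ i, (mintf P (ω i) S : ℝ)

lemma mintFhat_nonneg {m : ℕ} (P : Finset α) (ω : Fin m → Finset (α × α)) (S : Finset α) :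
    0 ≤ mintFhat P ω S := by
  unfold mintFhat
  positivity

lemma measureReal_pi_exists_le_abs_mintFhat_sub_mintF_le [Fintype α] {E : Finset (α × α)}
    {w : α × α → ℝ} (hw : ∀ e ∈ E, 0 ≤ w e ∧ w e ≤ 1) (P : Finset α) {m : ℕ} (hm : 0 < m)
    {ε : ℝ} (hε : 0 ≤ ε) :
    (Measure.pi fun _ : Fin m => discreteMeasure E.powerset (mintPr E w)).real
        {ω | ∃ S ∈ P.powerset, ε ≤ |mintFhat P ω S - mintF E w P S|}
      ≤ 2 ^ P.card * (2 * exp (-2 * m * ε ^ 2 / (Pᶜ.card : ℝ) ^ 2)) := by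
  have := isProbabilityMeasure_discreteMeasure (fun _ => mintPr_nonneg hw)
    (sum_mintPr_powerset E w)
  have hbound (H : Finset (α × α)) (S : Finset α) :
      (mintf P H S : ℝ) ∈ Set.Icc 0 (Pᶜ.card : ℝ) :=
    ⟨Nat.cast_nonneg _, Nat.cast_le.2 (mintf_le_card_compl P H S)⟩
  calc _ = (Measure.pi fun _ : Fin m => discreteMeasure E.powerset (mintPr E w)).real
          (⋃ S ∈ P.powerset, {ω | ε ≤ |mintFhat P ω S - mintF E w P S|}) := by
        congr 1; ext; simp
    _ ≤ ∑ S ∈ P.powerset, 2 * exp (-2 * m * ε ^ 2 / (Pᶜ.card : ℝ) ^ 2) := by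
        refine (measureReal_biUnion_finset_le _ _).trans (Finset.sum_le_sum fun S _ => ?_)
        rw [mintF_eq_integral hw, ← sub_zero (Pᶜ.card : ℝ)]
        exact measureReal_pi_le_abs_mean_sub_integral_le (.of_discrete) (hbound · S) hm hε
    _ = _ := by simp

end Mint

open Classical in
theorem stmt12_general {α : Type*} [Fintype α] [DecidableEq α] (E : Finset (α × α))
    (w : α × α → ℝ) (hw : ∀ e ∈ E, 0 ≤ w e ∧ w e ≤ 1)
    (P : Finset α) (hN : (Pᶜ : Finset α).Nonempty)
    (ε δ : ℝ) (hε : 0 < ε) (hδ0 : 0 < δ) (hδ1 : δ < 1)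
    (k : ℕ)
    (m : ℕ)
    (hm : m = ⌈((Pᶜ.card : ℝ) ^ 2 / (2 * ε ^ 2)) * Real.log ((2 : ℝ) ^ (P.card + 1) / δ)⌉₊)
    (A : (Fin m → Finset (α × α)) → Finset α)
    (hA1 : ∀ ω, A ω ⊆ P)
    (hA3 : ∀ ω ∈ Fintype.piFinset fun _ : Fin m => E.powerset,
      (1 / (m : ℝ)) * ∑ i : Fin m, (mintf P (ω i) (A ω) : ℝ) ≤
        2 * Real.sqrt P.card *
          sInf {x : ℝ | ∃ S ⊆ P, S.card ≤ k ∧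
            x = (1 / (m : ℝ)) * ∑ i : Fin m, (mintf P (ω i) S : ℝ)})
    (Sstar : Finset α) (hS1 : Sstar ⊆ P) (hS2 : Sstar.card ≤ k) :
    1 - 2 * δ ≤
      ∑ ω ∈ (Fintype.piFinset fun _ : Fin m => E.powerset).filter
          (fun ω : Fin m → Finset (α × α) =>
            mintF E w P (A ω) ≤ 2 * Real.sqrt P.card * mintF E w P Sstar
              + ε * (1 + 2 * Real.sqrt P.card)),
        ∏ i : Fin m, mintPr E w (ω i) := by
  have hN' : (0 : ℝ) < Pᶜ.card := Nat.cast_pos.2 hN.card_pos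
  have hm0 : 0 < m := by
    have : (1 : ℝ) < 2 ^ (P.card + 1) / δ :=
      (one_lt_div hδ0).2 (hδ1.trans_le (one_le_pow₀ one_le_two))
    rw [hm, Nat.ceil_pos]
    exact mul_pos (by positivity) (log_pos this)
  have hbad := (measureReal_pi_exists_le_abs_mintFhat_sub_mintF_le hw P hm0 hε.le).trans
    (show _ ≤ δ by
      rw [← mul_assoc, ← pow_succ]
      exact mul_exp_neg_le_of_le_mul_log hN' hε (by positivity) hδ0 (hm ▸ Nat.le_ceil _))
  have hgood : ∀ ω ∈ Fintype.piFinset (fun _ : Fin m => E.powerset),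
      ¬(∃ S ∈ P.powerset, ε ≤ |mintFhat P ω S - mintF E w P S|) →
        mintF E w P (A ω) ≤ 2 * √P.card * mintF E w P Sstar + ε * (1 + 2 * √P.card) := by
    intro ω hω hclose
    simp only [not_exists, not_and, not_le] at hclose
    have hinf : sInf {x | ∃ S ⊆ P, S.card ≤ k ∧ x = mintFhat P ω S} ≤ mintFhat P ω Sstar :=
      csInf_le ⟨0, by rintro _ ⟨S, -, -, rfl⟩; exact mintFhat_nonneg P ω S⟩ ⟨Sstar, hS1, hS2, rfl⟩
    exact le_mul_add_of_abs_sub_lt (by positivity) (hclose _ (Finset.mem_powerset.2 (hA1 ω)))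
      (hclose _ (Finset.mem_powerset.2 hS1))
      ((hA3 ω hω).trans (mul_le_mul_of_nonneg_left hinf (by positivity)))
  linarith [one_sub_measureReal_pi_le_sum_prod_filter (fun _ => mintPr_nonneg hw)
    (sum_mintPr_powerset E w) hgood]

open Classical in
/-- Approximation guarantee of CAST: if `A` maps each `m`-tuple `ω` of realizations to a
feasible set `A(ω) ⊆ P`, `|A(ω)| ≤ k`, with
`F̂_m^ω(A(ω)) ≤ 2√|P| · min {F̂_m^ω(S) : S ⊆ P, |S| ≤ k}`, and `S*` minimizes `F` over
feasible sets, then with probability at least `1 - 2δ` over the `m` independent draws,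
`F(A(ω)) ≤ 2√|P| · F(S*) + ε · (1 + 2√|P|)`. -/
theorem stmt12 {α : Type*} [Fintype α] [DecidableEq α] (E : Finset (α × α))
    (w : α × α → ℝ) (hw : ∀ e ∈ E, 0 ≤ w e ∧ w e ≤ 1)
    (P : Finset α) (hinc : ∀ e ∈ E, e.2 ∉ P) (hN : (Pᶜ : Finset α).Nonempty)
    (ε δ : ℝ) (hε : 0 < ε) (hδ0 : 0 < δ) (hδ1 : δ < 1)
    (k : ℕ) (hk : k ≤ P.card)
    (m : ℕ)
    (hm : m = ⌈((Pᶜ.card : ℝ) ^ 2 / (2 * ε ^ 2)) * Real.log ((2 : ℝ) ^ (P.card + 1) / δ)⌉₊)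
    (A : (Fin m → Finset (α × α)) → Finset α)
    (hA1 : ∀ ω, A ω ⊆ P) (hA2 : ∀ ω, (A ω).card ≤ k)
    (hA3 : ∀ ω ∈ Fintype.piFinset fun _ : Fin m => E.powerset,
      (1 / (m : ℝ)) * ∑ i : Fin m, (mintf P (ω i) (A ω) : ℝ) ≤
        2 * Real.sqrt P.card *
          sInf {x : ℝ | ∃ S ⊆ P, S.card ≤ k ∧
            x = (1 / (m : ℝ)) * ∑ i : Fin m, (mintf P (ω i) S : ℝ)})
    (Sstar : Finset α) (hS1 : Sstar ⊆ P) (hS2 : Sstar.card ≤ k)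
    (hS3 : ∀ S ⊆ P, S.card ≤ k → mintF E w P Sstar ≤ mintF E w P S) :
    1 - 2 * δ ≤
      ∑ ω ∈ (Fintype.piFinset fun _ : Fin m => E.powerset).filter
          (fun ω : Fin m → Finset (α × α) =>
            mintF E w P (A ω) ≤ 2 * Real.sqrt P.card * mintF E w P Sstar
              + ε * (1 + 2 * Real.sqrt P.card)),
        ∏ i : Fin m, mintPr E w (ω i) :=
  stmt12_general E w hw P hN ε δ hε hδ0 hδ1 k m hm A hA1 hA3 Sstar hS1 hS2
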